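/- arXiv:2107.03628 — 4 statements merged into one kernel-verified Lean document; each statement's English description precedes it below -/
import Mathlib

section
/- Let R be a commutative ring, a ⊆ R an ideal, M an R-module, and N ⊆ M a submodule. If p is a prime ideal weakly associated to M/N (i.e., p is minimal over (N :_R x) for some x ∈ M) and p does not contain (0 :_R N), then p is weakly associated to M. -/
open Submodule

universe u v

variable {R : Type u} [CommRing R]

/-- The small `a`-torsion submodule `Γ_a(M) = {x | ∃ n, a^n • x = 0}`. -/
def smallTorsion (a : Ideal R) (M : Type v) [AddCommGroup M] [Module R M] :
    Submodule R M where
  carrier := {x | ∃ n : ℕ, ∀ r ∈ a ^ n, r • x = 0}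
  zero_mem' := ⟨0, fun r _ => smul_zero r⟩
  add_mem' := by
    rintro x y ⟨n, hn⟩ ⟨m, hm⟩
    refine ⟨n + m, fun r hr => ?_⟩
    have h1 : r ∈ a ^ n := Ideal.pow_le_pow_right (Nat.le_add_right n m) hr
    have h2 : r ∈ a ^ m := Ideal.pow_le_pow_right (Nat.le_add_left m n) hr
    rw [smul_add, hn r h1, hm r h2, add_zero]
  smul_mem' := by
    rintro c x ⟨n, hn⟩
    exact ⟨n, fun r hr => by rw [smul_comm, hn r hr, smul_zero]⟩

/-- The large `a`-torsion submodule `Γ̄_a(M) = {x | a ⊆ √(0 : x)}`. -/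
def largeTorsion (a : Ideal R) (M : Type v) [AddCommGroup M] [Module R M] :
    Submodule R M where
  carrier := {x | ∀ r ∈ a, ∃ n : ℕ, r ^ n • x = 0}
  zero_mem' := fun r _ => ⟨0, smul_zero _⟩
  add_mem' := by
    rintro x y hx hy r hr
    obtain ⟨n, hn⟩ := hx r hr
    obtain ⟨m, hm⟩ := hy r hr
    refine ⟨n + m, ?_⟩
    have hx' : r ^ (n + m) • x = 0 := by
      rw [pow_add, mul_comm, mul_smul, hn, smul_zero]
    have hy' : r ^ (n + m) • y = 0 := by
      rw [pow_add, mul_smul, hm, smul_zero]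
    rw [smul_add, hx', hy', add_zero]
  smul_mem' := by
    rintro c x hx r hr
    obtain ⟨n, hn⟩ := hx r hr
    exact ⟨n, by rw [smul_comm, hn, smul_zero]⟩

/-- The set of weakly associated primes of `M`: primes minimal over the
annihilator `(0 :_R x)` of some `x ∈ M`. -/
def weakAssPrimes (R : Type u) [CommRing R] (M : Type v) [AddCommGroup M]
    [Module R M] : Set (Ideal R) :=
  {p | ∃ x : M, p ∈ Ideal.minimalPrimes (LinearMap.ker (LinearMap.toSpanSingleton R M x))}

/-- The variety of an ideal: the set of primes containing it. -/
def varI (a : Ideal R) : Set (Ideal R) := {p | p.IsPrime ∧ a ≤ p}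

/-! Choose `s ∈ (0 :_R N)` outside `p`. Then `(N :_R x) ⊆ (0 :_R s x)`, and `r s ∈ (N :_R x)` for
every `r ∈ (0 :_R s x)`, so primality of `p` and `s ∉ p` give `(0 :_R s x) ⊆ p`. Being minimal over
the smaller ideal `(N :_R x)`, the prime `p` is then minimal over `(0 :_R s x)`. -/

theorem Ideal.mem_minimalPrimes_of_le_of_le {R : Type*} [CommSemiring R] {I J p : Ideal R}
    (hp : p ∈ I.minimalPrimes) (hIJ : I ≤ J) (hJp : J ≤ p) : p ∈ J.minimalPrimes :=
  ⟨⟨hp.1.1, hJp⟩, fun _ hq hqp => hp.2 ⟨hq.1, hIJ.trans hq.2⟩ hqp⟩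

namespace Submodule

variable {R M : Type*} [CommSemiring R] [AddCommMonoid M] [Module R M] {N : Submodule R M}
  {x : M} {s : R}

theorem colon_span_singleton_le_ker_smul (hs : s ∈ N.annihilator) :
    N.colon (span R {x}) ≤ LinearMap.ker (LinearMap.toSpanSingleton R M (s • x)) := by
  intro r hr
  rw [mem_colon_span_singleton] at hr
  rw [LinearMap.mem_ker, LinearMap.toSpanSingleton_apply, smul_comm]
  exact mem_annihilator.mp hs _ hr

theorem mul_mem_colon_span_singleton_of_mem_ker_smul {r : R}
    (hr : r ∈ LinearMap.ker (LinearMap.toSpanSingleton R M (s • x))) :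
    r * s ∈ N.colon (span R {x}) := by
  rw [LinearMap.mem_ker, LinearMap.toSpanSingleton_apply] at hr
  rw [mem_colon_span_singleton, mul_smul, hr]
  exact N.zero_mem

theorem mem_minimalPrimes_ker_toSpanSingleton_smul {p : Ideal R}
    (hp : p ∈ (N.colon (span R {x})).minimalPrimes) (hs : s ∈ N.annihilator) (hsp : s ∉ p) :
    p ∈ Ideal.minimalPrimes (LinearMap.ker (LinearMap.toSpanSingleton R M (s • x))) := by
  refine Ideal.mem_minimalPrimes_of_le_of_le hp (colon_span_singleton_le_ker_smul hs) fun r hr => ?_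
  have hrs : r * s ∈ p := hp.1.2 (mul_mem_colon_span_singleton_of_mem_ker_smul hr)
  exact (hp.1.1.mem_or_mem hrs).resolve_right hsp

end Submodule

theorem stmt1_general {M : Type v} [AddCommGroup M] [Module R M]
    (N : Submodule R M) (p : Ideal R)
    (hx : ∃ x : M, p ∈ (N.colon (Submodule.span R {x})).minimalPrimes)
    (hann : ¬ N.annihilator ≤ p) :
    p ∈ weakAssPrimes R M := by
  obtain ⟨x, hp⟩ := hx
  obtain ⟨s, hs, hsp⟩ := SetLike.not_le_iff_exists.mp hann
  exact ⟨s • x, Submodule.mem_minimalPrimes_ker_toSpanSingleton_smul hp hs hsp⟩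

/-- If `p` is a prime weakly associated to `M/N` not containing `(0 :_R N)`,
then `p` is weakly associated to `M`. -/
theorem stmt1 {M : Type v} [AddCommGroup M] [Module R M] (a : Ideal R)
    (N : Submodule R M) (p : Ideal R)
    (hx : ∃ x : M, p ∈ (N.colon (Submodule.span R {x})).minimalPrimes)
    (hann : ¬ N.annihilator ≤ p) :
    p ∈ weakAssPrimes R M :=
  stmt1_general N p hx hann
end

section
/- Let R be a commutative ring, a ⊆ R an ideal, and M an R-module. Then Γ̄_a(M) = M if and only if Ass^f_R(M) ⊆ var(a). -/
open Submodule

universe u v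

variable {R : Type u} [CommRing R]

theorem mem_largeTorsion_iff_le_radical_ker {a : Ideal R} {M : Type v} [AddCommGroup M]
    [Module R M] {x : M} :
    x ∈ largeTorsion a M ↔
      a ≤ Ideal.radical (LinearMap.ker (LinearMap.toSpanSingleton R M x)) :=
  Iff.rfl

theorem Ideal.le_radical_iff_forall_mem_minimalPrimes {I J : Ideal R} :
    J ≤ I.radical ↔ ∀ p ∈ I.minimalPrimes, J ≤ p := by
  rw [← Ideal.sInf_minimalPrimes, le_sInf_iff]

/-- `Γ̄_a(M) = M` if and only if `Ass^f(M) ⊆ var(a)`. -/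
theorem stmt6 (a : Ideal R) (M : Type v) [AddCommGroup M] [Module R M] :
    largeTorsion a M = ⊤ ↔ weakAssPrimes R M ⊆ varI a := by
  simp only [Submodule.eq_top_iff', mem_largeTorsion_iff_le_radical_ker,
    Ideal.le_radical_iff_forall_mem_minimalPrimes]
  constructor
  · rintro h p ⟨x, hp⟩
    exact ⟨hp.1.1, h x p hp⟩
  · exact fun h x p hp => (h ⟨x, hp⟩).2
end

section
/- Let R be a commutative ring, a an ideal, and M an R-module that is weakly a-quasifair, i.e., Ass^f_R(Γ_a(M)) = Ass^f_R(M) ∩ var(a). Then M is weakly large a-quasifair, i.e., Ass^f_R(Γ̄_a(M)) = Ass^f_R(M) ∩ var(a). -/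
open Submodule

universe u v

variable {R : Type u} [CommRing R]

/-!
Every weakly associated prime of `Γ̄_a(M)` contains `a`: it contains the annihilator of some
`x ∈ Γ̄_a(M)`, hence also `√(0 : x) ⊇ a`. Conversely, `Γ_a(M) ⊆ Γ̄_a(M)` and weakly
associated primes only grow along injections, so the hypothesis gives
`Ass^f(M) ∩ var(a) = Ass^f(Γ_a(M)) ⊆ Ass^f(Γ̄_a(M))`.
-/

section

variable {M : Type v} {N : Type*} [AddCommGroup M] [Module R M] [AddCommGroup N] [Module R N]

lemma ker_toSpanSingleton_of_injective {f : N →ₗ[R] M} (hf : Function.Injective f) (x : N) :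
    LinearMap.ker (LinearMap.toSpanSingleton R M (f x)) =
      LinearMap.ker (LinearMap.toSpanSingleton R N x) := by
  rw [← LinearMap.comp_toSpanSingleton,
    LinearMap.ker_comp_of_ker_eq_bot _ (LinearMap.ker_eq_bot.2 hf)]

lemma weakAssPrimes_subset_of_injective {f : N →ₗ[R] M} (hf : Function.Injective f) :
    weakAssPrimes R N ⊆ weakAssPrimes R M := by
  rintro p ⟨x, hp⟩
  exact ⟨f x, by rwa [ker_toSpanSingleton_of_injective hf]⟩

lemma weakAssPrimes_mono {L L' : Submodule R M} (hLL' : L ≤ L') :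
    weakAssPrimes R L ⊆ weakAssPrimes R L' :=
  weakAssPrimes_subset_of_injective (Submodule.inclusion_injective hLL')

lemma smallTorsion_le_largeTorsion (a : Ideal R) : smallTorsion a M ≤ largeTorsion a M := by
  rintro x ⟨n, hn⟩ r hr
  exact ⟨n, hn _ (Ideal.pow_mem_pow hr n)⟩

lemma le_of_mem_largeTorsion {a p : Ideal R} [p.IsPrime] {x : M} (hx : x ∈ largeTorsion a M)
    (hp : LinearMap.ker (LinearMap.toSpanSingleton R M x) ≤ p) : a ≤ p := by
  intro r hr
  obtain ⟨n, hn⟩ := hx r hr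
  exact ‹p.IsPrime›.mem_of_pow_mem n (hp hn)

lemma weakAssPrimes_largeTorsion_subset_varI (a : Ideal R) :
    weakAssPrimes R (largeTorsion a M) ⊆ varI a := by
  rintro p ⟨x, ⟨hprime, hker⟩, -⟩
  rw [← ker_toSpanSingleton_of_injective (largeTorsion a M).injective_subtype] at hker
  exact ⟨hprime, le_of_mem_largeTorsion x.2 hker⟩

end

/-- A weakly `a`-quasifair module is weakly large `a`-quasifair. -/
theorem stmt10 (a : Ideal R) (M : Type v) [AddCommGroup M] [Module R M]
    (h : weakAssPrimes R (smallTorsion a M) = weakAssPrimes R M ∩ varI a) :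
    weakAssPrimes R (largeTorsion a M) = weakAssPrimes R M ∩ varI a := by
  refine subset_antisymm (fun p hp =>
    ⟨weakAssPrimes_subset_of_injective (largeTorsion a M).injective_subtype hp,
      weakAssPrimes_largeTorsion_subset_varI a hp⟩) ?_
  rw [← h]
  exact weakAssPrimes_mono (smallTorsion_le_largeTorsion a)
end

section
/- Let R be a commutative ring and a ⊆ R an ideal with √a maximal. If a is weakly fair (Ass^f_R(M/Γ_a(M)) = Ass^f_R(M) \ var(a) for all M), then a is half-centred: for every R-module M with Ass^f_R(M) ⊆ var(a), one has Γ_a(M) = M. -/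
open Submodule

universe u v

variable {R : Type u} [CommRing R]

lemma ker_toSpanSingleton_eq_top_iff {M : Type v} [AddCommGroup M] [Module R M] (x : M) :
    LinearMap.ker (LinearMap.toSpanSingleton R M x) = ⊤ ↔ x = 0 := by
  rw [LinearMap.ker_eq_top, LinearMap.toSpanSingleton_eq_zero_iff]

lemma weakAssPrimes_eq_empty_iff (M : Type v) [AddCommGroup M] [Module R M] :
    weakAssPrimes R M = ∅ ↔ Subsingleton M := by
  simp only [weakAssPrimes, Set.eq_empty_iff_forall_notMem, Set.mem_ofPred_eq, not_exists]
  rw [forall_comm, subsingleton_iff_forall_eq 0]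
  refine forall_congr' fun x => ?_
  rw [← ker_toSpanSingleton_eq_top_iff (R := R), ← Ideal.minimalPrimes_eq_empty_iff,
    Set.eq_empty_iff_forall_notMem]
  rfl

theorem stmt16_general (a : Ideal R)
    (hwf : ∀ (M : Type v) [AddCommGroup M] [Module R M],
        weakAssPrimes R (M ⧸ smallTorsion a M) = weakAssPrimes R M \ varI a) :
    ∀ (M : Type v) [AddCommGroup M] [Module R M],
      weakAssPrimes R M ⊆ varI a → smallTorsion a M = ⊤ := by
  intro M _ _ hsub
  have hempty : weakAssPrimes R (M ⧸ smallTorsion a M) = ∅ := by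
    rw [hwf M, Set.sdiff_eq_empty]
    exact hsub
  rwa [weakAssPrimes_eq_empty_iff, Submodule.Quotient.subsingleton_iff] at hempty

/-- If `√a` is maximal and `a` is weakly fair, then `a` is half-centred. -/
theorem stmt16 (a : Ideal R) (hmax : a.radical.IsMaximal)
    (hwf : ∀ (M : Type v) [AddCommGroup M] [Module R M],
        weakAssPrimes R (M ⧸ smallTorsion a M) = weakAssPrimes R M \ varI a) :
    ∀ (M : Type v) [AddCommGroup M] [Module R M],
      weakAssPrimes R M ⊆ varI a → smallTorsion a M = ⊤ :=
  stmt16_general a hwf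
end
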